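/- arXiv:2605.24864 — 2 statements merged into one kernel-verified Lean document; each statement's English description precedes it below -/
import Mathlib

section
/- Let G be a non-abelian group of order p^3 for an odd prime p. Then cod(G) = { 1, p, p^2 }. -/
open scoped Pointwise

/-- A representation is irreducible if the space is nontrivial and the only
invariant subspaces are `⊥` and `⊤`. -/
def Rep.IsIrreducible {G V : Type*} [Group G] [AddCommGroup V] [Module ℂ V]
    (ρ : Representation ℂ G V) : Prop :=
  Nontrivial V ∧ ∀ W : Submodule ℂ V, (∀ g : G, ∀ v ∈ W, ρ g v ∈ W) → W = ⊥ ∨ W = ⊤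

/-- The kernel of a representation. -/
noncomputable def Rep.ker {G V : Type*} [Group G] [AddCommGroup V] [Module ℂ V]
    (ρ : Representation ℂ G V) : Subgroup G := (Representation.asGroupHom ρ).ker

/-- The codegree of (the character of) a representation: `|G : ker| / degree`. -/
noncomputable def Rep.cod {G V : Type*} [Group G] [AddCommGroup V] [Module ℂ V]
    (ρ : Representation ℂ G V) : ℕ := (Rep.ker ρ).index / Module.finrank ℂ V

/-- The set of codegrees of irreducible (complex) characters of `G`. -/
def codSet (G : Type*) [Group G] : Set ℕ :=
  {n | ∃ (V : Type) (_ : AddCommGroup V) (_ : Module ℂ V) (_ : FiniteDimensional ℂ V)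
      (ρ : Representation ℂ G V), Rep.IsIrreducible ρ ∧ Rep.cod ρ = n}

/-- The set of codegrees of nonlinear irreducible characters of `G`. -/
def nlCodSet (G : Type*) [Group G] : Set ℕ :=
  {n | ∃ (V : Type) (_ : AddCommGroup V) (_ : Module ℂ V) (_ : FiniteDimensional ℂ V)
      (ρ : Representation ℂ G V), Rep.IsIrreducible ρ ∧ 1 < Module.finrank ℂ V ∧
      Rep.cod ρ = n}

/-- The set of degrees of irreducible characters of `G`. -/
def cdSet (G : Type*) [Group G] : Set ℕ :=
  {n | ∃ (V : Type) (_ : AddCommGroup V) (_ : Module ℂ V) (_ : FiniteDimensional ℂ V)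
      (ρ : Representation ℂ G V), Rep.IsIrreducible ρ ∧ Module.finrank ℂ V = n}

/-- `G` is a VZ-group: every nonlinear irreducible character vanishes off the center. -/
def IsVZ (G : Type*) [Group G] : Prop :=
  ∀ (V : Type) (_ : AddCommGroup V) (_ : Module ℂ V) (_ : FiniteDimensional ℂ V)
    (ρ : Representation ℂ G V), Rep.IsIrreducible ρ → 1 < Module.finrank ℂ V →
    ∀ g ∉ Subgroup.center G, LinearMap.trace ℂ V (ρ g) = 0

/-- `G` is a Camina group: the conjugacy class of every `g ∉ G'` is `gG'`. -/
def IsCamina (G : Type*) [Group G] : Prop :=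
  ∀ g : G, g ∉ commutator G → {h | IsConj g h} = g • (commutator G : Set G)

/-!
The centre `Z` of `G` has order `p` and equals `G'`. If `Z ≤ ker χ`, then `χ` is linear and its
codegree `|G : ker χ|` divides `|G : Z| = p ^ 2`. Otherwise `ker χ ∩ Z = 1`, and since `G' ≤ Z`
this forces `ker χ = 1`. A central `z ∉ ker χ` then acts by a scalar `ω ≠ 1` with `ω ^ p = 1`,
and `ω ^ χ(1) = det ρ(z) = 1` because `z ∈ G'`; so `p ∣ χ(1)`. Also `χ(1) ≤ p`: an abelian
subgroup of index `p` has a common eigenvector, whose translates by coset representatives span.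
Hence the codegree is `p ^ 3 / p = p ^ 2`. The values `1` and `p` are codegrees of linear
characters with kernels `G` and a subgroup of index `p`; `p ^ 2` is attained by an irreducible
piece of the regular representation on which `Z` acts through a faithful character.
-/

theorem Module.End.smul_one_eq_one_iff {V : Type*} [AddCommGroup V] [Module ℂ V] [Nontrivial V]
    {c : ℂ} : c • (1 : Module.End ℂ V) = 1 ↔ c = 1 := by
  rw [← Algebra.algebraMap_eq_smul_one, ← map_one (algebraMap ℂ (Module.End ℂ V))]
  exact (algebraMap ℂ (Module.End ℂ V)).injective.eq_iff

theorem exists_injective_monoidHom_units (H : Type*) [Group H] [IsCyclic H] [Finite H] :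
    ∃ χ : H →* ℂˣ, Function.Injective χ := by
  have : NeZero (Nat.card H) := ⟨Nat.card_pos.ne'⟩
  let e : H ≃* rootsOfUnity (Nat.card H) ℂ :=
    mulEquivOfCyclicCardEq (Complex.card_rootsOfUnity _).symm
  exact ⟨(rootsOfUnity _ ℂ).subtype.comp e.toMonoidHom, Subtype.val_injective.comp e.injective⟩

section GroupTheory

variable {G : Type*} [Group G]

open Subgroup in
theorem Subgroup.Normal.eq_bot_of_disjoint_center {N : Subgroup G} (hN : N.Normal)
    (hG : _root_.commutator G ≤ center G) (hNZ : Disjoint N (center G)) : N = ⊥ := by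
  have hle : ⁅N, ⊤⁆ ≤ N ⊓ center G :=
    le_inf (commutator_le_left N ⊤) ((commutator_mono le_top le_top).trans hG)
  exact hNZ.eq_bot_of_le
    (commutator_top_right_eq_bot_iff_le_center.mp (eq_bot_iff.mpr (hle.trans hNZ.eq_bot.le)))

variable {p : ℕ} [Fact p.Prime]

theorem card_center_eq_prime (hcard : Nat.card G = p ^ 3) (hG : ¬ IsMulCommutative G) :
    Nat.card (Subgroup.center G) = p := by
  have hp := (Fact.out : p.Prime)
  obtain ⟨k, hk0, hk⟩ := IsPGroup.card_center_eq_prime_pow hcard three_pos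
  have hmul := (Subgroup.center G).card_mul_index
  rw [hk, hcard] at hmul
  have hk3 : k ≤ 3 := (Nat.pow_dvd_pow_iff_le_right hp.one_lt).mp ⟨_, hmul.symm⟩
  suffices ¬ 2 ≤ k by rw [hk, show k = 1 by omega, pow_one]
  intro hk2
  have : (Subgroup.center G).index ∣ p := by
    refine Nat.dvd_of_mul_dvd_mul_left (pow_pos hp.pos 2) ?_
    rw [← pow_succ, ← hmul]
    exact mul_dvd_mul_right (pow_dvd_pow p hk2) _
  have := isCyclic_of_card_dvd_prime this
  exact hG (isMulCommutative_of_isCyclic_quotient_center_self G)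

theorem index_center_eq_prime_sq (hcard : Nat.card G = p ^ 3) (hG : ¬ IsMulCommutative G) :
    (Subgroup.center G).index = p ^ 2 := by
  have hmul := (Subgroup.center G).card_mul_index
  rw [card_center_eq_prime hcard hG, hcard, pow_succ' p 2] at hmul
  exact Nat.eq_of_mul_eq_mul_left (Fact.out : p.Prime).pos hmul

theorem commutator_eq_center [Finite G] (hcard : Nat.card G = p ^ 3) (hG : ¬ IsMulCommutative G) :
    commutator G = Subgroup.center G := by
  have hp := (Fact.out : p.Prime)
  have hZ := card_center_eq_prime hcard hG
  let := IsPGroup.commGroupOfCardEqPrimeSq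
    ((Subgroup.index_eq_card _).symm.trans (index_center_eq_prime_sq hcard hG))
  have hle : commutator G ≤ Subgroup.center G := by
    simpa using Abelianization.commutator_subset_ker (QuotientGroup.mk' (Subgroup.center G))
  have hne : commutator G ≠ ⊥ := by
    rwa [Ne, commutator_eq_bot_iff_center_eq_top, Subgroup.center_eq_top_iff]
  refine Subgroup.eq_of_le_of_card_ge hle (le_of_eq ?_)
  rcases (Nat.dvd_prime hp).mp (hZ ▸ Subgroup.card_dvd_of_le hle) with h | h
  · exact absurd (Subgroup.card_eq_one.mp h) hne
  · rw [h, hZ]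

theorem exists_normal_isMulCommutative_index_eq [Finite G] (hcard : Nat.card G = p ^ 3) :
    ∃ M : Subgroup G, M.Normal ∧ IsMulCommutative M ∧ M.index = p := by
  have hp := (Fact.out : p.Prime)
  obtain ⟨M, hM⟩ := Sylow.exists_subgroup_card_pow_prime (G := G) p (n := 2)
    (by rw [hcard]; exact pow_dvd_pow p (by norm_num))
  have hidx : M.index = p := by
    have hmul := M.card_mul_index
    rw [hM, hcard, pow_succ] at hmul
    exact Nat.eq_of_mul_eq_mul_left (pow_pos hp.pos 2) hmul
  refine ⟨M, Subgroup.normal_of_index_eq_minFac_card ?_,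
    IsPGroup.isMulCommutative_of_card_eq_prime_sq hM, hidx⟩
  rw [hidx, hcard, hp.pow_minFac three_ne_zero]

end GroupTheory

namespace Rep

variable {G V : Type*} [Group G] [AddCommGroup V] [Module ℂ V] {ρ : Representation ℂ G V}

theorem mem_ker {g : G} : g ∈ Rep.ker ρ ↔ ρ g = 1 := by
  rw [Rep.ker, MonoidHom.mem_ker, Units.ext_iff, Representation.asGroupHom_apply, Units.val_one]

instance ker_normal (ρ : Representation ℂ G V) : (Rep.ker ρ).Normal :=
  MonoidHom.normal_ker _

theorem commute_of_commutator_le_ker (h : commutator G ≤ Rep.ker ρ) (g k : G) :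
    Commute (ρ g) (ρ k) := by
  have hgk := h (Subgroup.commutator_mem_commutator (Subgroup.mem_top g) (Subgroup.mem_top k))
  rw [Rep.ker, MonoidHom.mem_ker, map_commutatorElement,
    commutatorElement_eq_one_iff_commute] at hgk
  simpa only [Representation.asGroupHom_apply] using hgk.units_val

theorem exists_subrepresentation_le_isIrreducible [FiniteDimensional ℂ V]
    (σ : Subrepresentation ρ) (hσ : σ.toSubmodule ≠ ⊥) :
    ∃ τ : Subrepresentation ρ, τ ≤ σ ∧ Rep.IsIrreducible τ.toRepresentation := by
  have : WellFoundedLT (Subrepresentation ρ) :=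
    StrictMono.wellFoundedLT (f := Subrepresentation.toSubmodule) fun _ _ h => h
  obtain ⟨τ, ⟨hτσ, hτ⟩, hmin⟩ :=
    wellFounded_lt.has_min {τ : Subrepresentation ρ | τ ≤ σ ∧ τ.toSubmodule ≠ ⊥} ⟨σ, le_rfl, hσ⟩
  refine ⟨τ, hτσ, Submodule.nontrivial_iff_ne_bot.mpr hτ, fun W hW => ?_⟩
  refine or_iff_not_imp_left.mpr fun hW0 => ?_
  let τ' : Subrepresentation ρ :=
    ⟨W.map τ.toSubmodule.subtype, by
      rintro g _ ⟨w, hw, rfl⟩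
      exact ⟨_, hW g w hw, rfl⟩⟩
  have hτ'τ : τ' ≤ τ := by
    rintro _ ⟨w, -, rfl⟩
    exact w.2
  have hτ' : τ'.toSubmodule ≠ ⊥ := by
    rw [← Submodule.map_bot τ.toSubmodule.subtype]
    exact (Submodule.map_injective_of_injective τ.toSubmodule.injective_subtype).ne hW0
  have : τ' = τ := hτ'τ.eq_of_not_lt (hmin τ' ⟨hτ'τ.trans hτσ, hτ'⟩)
  rw [← Submodule.comap_map_eq_of_injective τ.toSubmodule.injective_subtype W]
  exact (congrArg (Submodule.comap τ.toSubmodule.subtype ∘ Subrepresentation.toSubmodule)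
    this).trans (Submodule.comap_subtype_self _)

theorem IsIrreducible.span_orbit_eq_top (hρ : Rep.IsIrreducible ρ) {v : V} (hv : v ≠ 0) :
    Submodule.span ℂ (Set.range fun g => ρ g v) = ⊤ := by
  refine (hρ.2 _ fun g w hw => ?_).resolve_left fun h => hv ?_
  · refine (Submodule.map_span_le _ _ _).mpr ?_ ⟨w, hw, rfl⟩
    rintro _ ⟨k, rfl⟩
    exact Submodule.subset_span ⟨g * k, by simp [Module.End.mul_apply]⟩
  · rw [← Submodule.mem_bot ℂ, ← h]
    exact Submodule.subset_span ⟨1, by simp⟩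

theorem IsIrreducible.exists_eq_smul_one_of_commute [FiniteDimensional ℂ V]
    (hρ : Rep.IsIrreducible ρ) {T : Module.End ℂ V} (hT : ∀ g, Commute T (ρ g)) :
    ∃ c : ℂ, T = c • 1 := by
  have := hρ.1
  obtain ⟨c, hc⟩ := Module.End.exists_eigenvalue T
  refine ⟨c, ?_⟩
  have hinv : ∀ g : G, ∀ v ∈ T.eigenspace c, ρ g v ∈ T.eigenspace c := fun g v hv => by
    rw [Module.End.mem_eigenspace_iff] at hv ⊢
    rw [← Module.End.mul_apply, (hT g).eq, Module.End.mul_apply, hv, map_smul]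
  have htop : T.eigenspace c = ⊤ := (hρ.2 _ hinv).resolve_left hc
  ext v
  simpa using Module.End.mem_eigenspace_iff.mp (htop ▸ Submodule.mem_top : v ∈ T.eigenspace c)

theorem IsIrreducible.finrank_eq_one_of_commute [FiniteDimensional ℂ V]
    (hρ : Rep.IsIrreducible ρ) (h : ∀ g k, Commute (ρ g) (ρ k)) : Module.finrank ℂ V = 1 := by
  have := hρ.1
  obtain ⟨v, hv⟩ := exists_ne (0 : V)
  have hline : ∀ g : G, ∀ w ∈ ℂ ∙ v, ρ g w ∈ ℂ ∙ v := fun g w hw => by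
    obtain ⟨c, hc⟩ := hρ.exists_eq_smul_one_of_commute (h g)
    rw [hc]
    exact Submodule.smul_mem _ c hw
  rw [← finrank_top ℂ V, ← (hρ.2 _ hline).resolve_left (by simpa using hv),
    finrank_span_singleton hv]

theorem exists_ne_zero_forall_mem_span_singleton [FiniteDimensional ℂ V] [Nontrivial V]
    {H : Subgroup G} (hH : ∀ a ∈ H, ∀ b ∈ H, Commute (ρ a) (ρ b)) :
    ∃ v ≠ 0, ∀ h ∈ H, ρ h v ∈ ℂ ∙ v := by
  obtain ⟨τ, -, hτ⟩ :=
    exists_subrepresentation_le_isIrreducible (⊤ : Subrepresentation (ρ.comp H.subtype)) top_ne_bot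
  have := hτ.1
  obtain ⟨v, hv⟩ := exists_ne (0 : τ.toSubmodule)
  have hline := (finrank_eq_one_iff_of_nonzero' v hv).mp <| hτ.finrank_eq_one_of_commute
    fun a b => LinearMap.ext fun w => Subtype.ext (LinearMap.congr_fun (hH a a.2 b b.2).eq w)
  refine ⟨v, by simpa using hv, fun h hh => ?_⟩
  obtain ⟨c, hc⟩ := hline (τ.toRepresentation ⟨h, hh⟩ v)
  exact Submodule.mem_span_singleton.mpr ⟨c, congrArg Subtype.val hc⟩

theorem IsIrreducible.finrank_le_index (hρ : Rep.IsIrreducible ρ) [FiniteDimensional ℂ V]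
    {H : Subgroup G} [H.FiniteIndex] {v : V} (hv : v ≠ 0) (hH : ∀ h ∈ H, ρ h v ∈ ℂ ∙ v) :
    Module.finrank ℂ V ≤ H.index := by
  have := H.fintypeQuotientOfFiniteIndex
  let w : G ⧸ H → V := fun q => ρ q.out v
  have hle : Submodule.span ℂ (Set.range fun g => ρ g v) ≤ Submodule.span ℂ (Set.range w) := by
    rw [Submodule.span_le]
    rintro _ ⟨g, rfl⟩
    obtain ⟨c, hc⟩ := Submodule.mem_span_singleton.mp
      (hH _ (QuotientGroup.eq.mp (QuotientGroup.out_eq' (g : G ⧸ H))))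
    have hg : ρ g v = c • w g := by
      rw [← map_smul, hc, ← Module.End.mul_apply, ← map_mul, mul_inv_cancel_left]
    change ρ g v ∈ _
    rw [hg]
    exact Submodule.smul_mem _ _ (Submodule.subset_span ⟨_, rfl⟩)
  calc Module.finrank ℂ V = Module.finrank ℂ (⊤ : Submodule ℂ V) := finrank_top ℂ V |>.symm
    _ ≤ Module.finrank ℂ (Submodule.span ℂ (Set.range w)) :=
      Submodule.finrank_mono (hρ.span_orbit_eq_top hv ▸ hle)
    _ ≤ Fintype.card (G ⧸ H) := finrank_range_le_card w
    _ = H.index := by rw [Subgroup.index, Nat.card_eq_fintype_card]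

theorem IsIrreducible.conj (hρ : Rep.IsIrreducible ρ) {W : Type*} [AddCommGroup W] [Module ℂ W]
    (e : V ≃ₗ[ℂ] W) :
    Rep.IsIrreducible ((e.conjAlgEquiv ℂ).toMonoidHom.comp ρ) := by
  have := hρ.1
  refine ⟨e.injective.nontrivial, fun U hU => ?_⟩
  have hUe : ∀ g : G, ∀ v ∈ U.comap e.toLinearMap, ρ g v ∈ U.comap e.toLinearMap := by
    intro g v hv
    simpa using hU g (e v) hv
  rw [← Submodule.map_comap_eq_of_surjective e.surjective U]
  rcases hρ.2 _ hUe with h | h <;> rw [h]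
  · exact Or.inl (Submodule.map_bot _)
  · exact Or.inr (by rw [Submodule.map_top, LinearEquiv.range])

theorem ker_conj {W : Type*} [AddCommGroup W] [Module ℂ W] (e : V ≃ₗ[ℂ] W) :
    Rep.ker ((e.conjAlgEquiv ℂ).toMonoidHom.comp ρ) = Rep.ker ρ := by
  ext g
  simp only [mem_ker, MonoidHom.comp_apply, MulEquiv.coe_toMonoidHom]
  exact (e.conjAlgEquiv ℂ).map_eq_one_iff

theorem IsIrreducible.cod_mem_codSet [FiniteDimensional ℂ V] (hρ : Rep.IsIrreducible ρ) :
    Rep.cod ρ ∈ codSet G := by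
  -- `codSet` only ranges over spaces in `Type`, so move `ρ` to `Fin n → ℂ`.
  let e := (Module.finBasis ℂ V).equivFun
  exact ⟨_, _, _, inferInstance, _, hρ.conj e,
    by rw [Rep.cod, Rep.cod, ker_conj, e.finrank_eq.symm]⟩

noncomputable def ofChar (χ : G →* ℂˣ) : Representation ℂ G ℂ :=
  (Algebra.lmul ℂ ℂ).toMonoidHom.comp ((Units.coeHom ℂ).comp χ)

theorem isIrreducible_ofChar (χ : G →* ℂˣ) : Rep.IsIrreducible (ofChar χ) :=
  ⟨inferInstance, fun W _ => Ideal.eq_bot_or_top W⟩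

theorem ker_ofChar (χ : G →* ℂˣ) : Rep.ker (ofChar χ) = χ.ker := by
  ext g
  rw [mem_ker, MonoidHom.mem_ker, ← Units.val_eq_one]
  exact Algebra.lmul_injective.eq_iff' (map_one _)

theorem index_mem_codSet (N : Subgroup G) [N.Normal] [IsCyclic (G ⧸ N)] [Finite (G ⧸ N)] :
    N.index ∈ codSet G := by
  obtain ⟨χ, hχ⟩ := exists_injective_monoidHom_units (G ⧸ N)
  have := (isIrreducible_ofChar (χ.comp (QuotientGroup.mk' N))).cod_mem_codSet
  rwa [Rep.cod, ker_ofChar, MonoidHom.ker_comp_of_injective _ _ hχ, QuotientGroup.ker_mk',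
    Module.finrank_self, Nat.div_one] at this

theorem exists_isIrreducible_apply_center_eq_smul [Finite G] (χ : Subgroup.center G →* ℂˣ)
    (z : Subgroup.center G) :
    ∃ τ : Subrepresentation (Representation.ofMulAction ℂ G G),
      Rep.IsIrreducible τ.toRepresentation ∧ τ.toRepresentation z = (χ z : ℂ) • 1 := by
  classical
  have := Fintype.ofFinite (Subgroup.center G)
  let R := Representation.ofMulAction ℂ G G
  let v : MonoidAlgebra ℂ G := ∑ c : Subgroup.center G, (χ c : ℂ)⁻¹ • MonoidAlgebra.single (c : G) 1
  have hv0 : v ≠ 0 := fun h => by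
    have := congrArg (fun f => f.coeff 1) h
    simp [v, MonoidAlgebra.coeff_sum, Finsupp.single_apply] at this
  have hv : R z v = (χ z : ℂ) • v := by
    simp only [v, R, map_sum, map_smul, Representation.ofMulAction_single, Finset.smul_sum,
      smul_smul]
    refine Fintype.sum_equiv (Equiv.mulLeft z) _ _ fun c => ?_
    simp [mul_comm]
  let U : Subrepresentation R := ⟨Module.End.eigenspace (R z) (χ z), fun g w hw => by
    rw [Module.End.mem_eigenspace_iff] at hw ⊢
    rw [← Module.End.mul_apply, ← map_mul, (Subgroup.mem_center_iff.mp z.2 g).symm, map_mul,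
      Module.End.mul_apply, hw, map_smul]⟩
  obtain ⟨τ, hτU, hτ⟩ := exists_subrepresentation_le_isIrreducible U
    (fun h => hv0 ((Submodule.eq_bot_iff _).mp h v (Module.End.mem_eigenspace_iff.mpr hv)))
  exact ⟨τ, hτ, LinearMap.ext fun w => Subtype.ext (Module.End.mem_eigenspace_iff.mp (hτU w.2))⟩

end Rep

section Codegrees

variable {G : Type*} [Group G] [Finite G] {p : ℕ} [Fact p.Prime]
  {V : Type*} [AddCommGroup V] [Module ℂ V] {ρ : Representation ℂ G V}

theorem ker_eq_bot_of_not_center_le_ker (hcard : Nat.card G = p ^ 3)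
    (hG : ¬ IsMulCommutative G) (h : ¬ Subgroup.center G ≤ Rep.ker ρ) : Rep.ker ρ = ⊥ := by
  have : Fact (Nat.card (Subgroup.center G)).Prime := ⟨card_center_eq_prime hcard hG ▸ Fact.out⟩
  refine (Rep.ker_normal ρ).eq_bot_of_disjoint_center (commutator_eq_center hcard hG).le
    (Subgroup.subgroupOf_eq_bot.mp ?_)
  exact ((Rep.ker ρ).subgroupOf _).eq_bot_or_eq_top_of_prime_card.resolve_right
    (mt Subgroup.subgroupOf_eq_top.mp h)

variable [FiniteDimensional ℂ V]

theorem cod_mem_of_center_le_ker (hcard : Nat.card G = p ^ 3) (hG : ¬ IsMulCommutative G)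
    (hρ : Rep.IsIrreducible ρ) (h : Subgroup.center G ≤ Rep.ker ρ) :
    Rep.cod ρ ∈ ({1, p, p ^ 2} : Set ℕ) := by
  have h1 : Module.finrank ℂ V = 1 := hρ.finrank_eq_one_of_commute
    (Rep.commute_of_commutator_le_ker ((commutator_eq_center hcard hG).le.trans h))
  have hidx : (Rep.ker ρ).index ∣ p ^ 2 :=
    index_center_eq_prime_sq hcard hG ▸ Subgroup.index_dvd_of_le h
  obtain ⟨k, hk, hk'⟩ := (Nat.dvd_prime_pow Fact.out).mp hidx
  rw [Rep.cod, h1, Nat.div_one, hk']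
  interval_cases k <;> simp

theorem finrank_eq_of_not_center_le_ker (hcard : Nat.card G = p ^ 3)
    (hG : ¬ IsMulCommutative G) (hρ : Rep.IsIrreducible ρ) (h : ¬ Subgroup.center G ≤ Rep.ker ρ) :
    Module.finrank ℂ V = p := by
  have := hρ.1
  obtain ⟨z, hzZ, hzk⟩ := Set.not_subset.mp h
  obtain ⟨c, hc⟩ := hρ.exists_eq_smul_one_of_commute fun g =>
    (show Commute z g from (Subgroup.mem_center_iff.mp hzZ g).symm).map ρ
  have hc1 : c ≠ 1 := fun h1 => hzk (Rep.mem_ker.mpr (by rw [hc, h1, one_smul]))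
  have hcp : c ^ p = 1 := by
    have hzp : z ^ p = 1 := by
      simpa [card_center_eq_prime hcard hG] using
        congrArg Subtype.val (pow_card_eq_one' (x := (⟨z, hzZ⟩ : Subgroup.center G)))
    have : ρ (z ^ p) = c ^ p • 1 := by rw [map_pow, hc, smul_pow, one_pow]
    rwa [hzp, map_one, eq_comm, Module.End.smul_one_eq_one_iff] at this
  have hcd : c ^ Module.finrank ℂ V = 1 := by
    have hdet : LinearMap.det (ρ z) = 1 := by
      have := Abelianization.commutator_subset_ker ((Units.map LinearMap.det).comp ρ.asGroupHom)
        ((commutator_eq_center hcard hG).ge hzZ)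
      simpa [Representation.asGroupHom_apply] using congrArg Units.val this
    rwa [hc, LinearMap.det_smul, map_one, mul_one] at hdet
  have hpd : p ∣ Module.finrank ℂ V := orderOf_eq_prime hcp hc1 ▸ orderOf_dvd_of_pow_eq_one hcd
  obtain ⟨M, -, hM, hMidx⟩ := exists_normal_isMulCommutative_index_eq hcard
  obtain ⟨v, hv, hvM⟩ := Rep.exists_ne_zero_forall_mem_span_singleton (H := M) fun a ha b hb =>
    Commute.map (congrArg Subtype.val (hM.is_comm.comm ⟨a, ha⟩ ⟨b, hb⟩)) ρ
  exact le_antisymm (hMidx ▸ hρ.finrank_le_index hv hvM) (Nat.le_of_dvd Module.finrank_pos hpd)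

theorem cod_eq_of_not_center_le_ker (hcard : Nat.card G = p ^ 3) (hG : ¬ IsMulCommutative G)
    (hρ : Rep.IsIrreducible ρ) (h : ¬ Subgroup.center G ≤ Rep.ker ρ) : Rep.cod ρ = p ^ 2 := by
  rw [Rep.cod, ker_eq_bot_of_not_center_le_ker hcard hG h, Subgroup.index_bot, hcard,
    finrank_eq_of_not_center_le_ker hcard hG hρ h, pow_succ,
    Nat.mul_div_cancel _ (Fact.out : p.Prime).pos]

end Codegrees

theorem sq_mem_codSet {G : Type*} [Group G] [Finite G] {p : ℕ} [Fact p.Prime]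
    (hcard : Nat.card G = p ^ 3) (hG : ¬ IsMulCommutative G) : p ^ 2 ∈ codSet G := by
  have hZ := card_center_eq_prime hcard hG
  have := isCyclic_of_prime_card hZ
  have := Finite.one_lt_card_iff_nontrivial.mp (hZ ▸ (Fact.out : p.Prime).one_lt)
  obtain ⟨χ, hχ⟩ := exists_injective_monoidHom_units (Subgroup.center G)
  obtain ⟨z, hz⟩ := exists_ne (1 : Subgroup.center G)
  obtain ⟨τ, hτ, hτz⟩ := Rep.exists_isIrreducible_apply_center_eq_smul χ z
  have := hτ.1
  have hzk : (z : G) ∉ Rep.ker τ.toRepresentation := by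
    rw [Rep.mem_ker, hτz, Module.End.smul_one_eq_one_iff, Units.val_eq_one]
    exact (hχ.ne_iff' (map_one χ)).mpr hz
  exact cod_eq_of_not_center_le_ker hcard hG hτ (fun h => hzk (h z.2)) ▸ hτ.cod_mem_codSet

theorem stmt13_general {p : ℕ} (hp : p.Prime) (G : Type*) [Group G]
    (hcard : Nat.card G = p ^ 3) (hna : ¬ ∀ a b : G, a * b = b * a) :
    codSet G = {1, p, p ^ 2} := by
  have : Fact p.Prime := ⟨hp⟩
  have : Finite G := Nat.finite_of_card_ne_zero (by simp [hcard, hp.ne_zero])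
  have hG : ¬ IsMulCommutative G := fun h => hna h.is_comm.comm
  refine subset_antisymm ?_ ?_
  · rintro _ ⟨V, _, _, _, ρ, hρ, rfl⟩
    by_cases h : Subgroup.center G ≤ Rep.ker ρ
    · exact cod_mem_of_center_le_ker hcard hG hρ h
    · simp [cod_eq_of_not_center_le_ker hcard hG hρ h]
  · rintro n (rfl | rfl | rfl)
    · have := QuotientGroup.subsingleton_quotient_top (G := G)
      simpa using Rep.index_mem_codSet (⊤ : Subgroup G)
    · obtain ⟨M, hM, -, hMidx⟩ := exists_normal_isMulCommutative_index_eq hcard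
      have := isCyclic_of_prime_card (α := G ⧸ M) (hMidx ▸ M.index_eq_card).symm
      exact hMidx ▸ Rep.index_mem_codSet M
    · exact sq_mem_codSet hcard hG

/-- If `G` is a non-abelian group of order `p^3` for an odd prime `p`,
then `cod(G) = {1, p, p^2}`. -/
theorem stmt13 {p : ℕ} (hp : p.Prime) (hodd : Odd p) (G : Type*) [Group G] [Finite G]
    (hcard : Nat.card G = p ^ 3) (hna : ¬ ∀ a b : G, a * b = b * a) :
    codSet G = {1, p, p ^ 2} :=
  stmt13_general hp G hcard hna
end

section
/- Let G be a group of order p^5 (p > 3 prime) with Z(G) = G' ≅ C_p and cd(G) = {1, p^2}. Then G is both a VZ-group and an extraspecial p-group, and cod(G) = {1, p, p^3}. -/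
/-!
Since `G' = Z(G)` has prime order `p`, commutators are central of order `p`, so `p`-th powers are
central and `G/Z(G)` has exponent `p`. If a nonlinear irreducible `ρ` were trivial on some
`1 ≠ z ∈ Z(G)`, it would be trivial on `Z(G) = G'`, hence linear by Schur's lemma. So for
`g ∉ Z(G)` and `[y, g] ≠ 1`, `ρ [y, g]` is a scalar `c ≠ 1`, and
`tr ρ(g) = tr ρ(y g y⁻¹) = c · tr ρ(g)` forces `tr ρ(g) = 0`. Nonlinear irreducibles are therefore
faithful, of codegree `p^5 / p^2 = p^3`, while linear characters factor through `G/G'`, of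
exponent `p`, so their codegrees are `1` and `p`, both of which occur since `G' ≠ G`.
-/

open scoped Pointwise

open scoped commutatorElement

theorem Subgroup.le_of_mem_of_prime_card {G : Type*} [Group G] {H K : Subgroup G}
    (hH : (Nat.card H).Prime) {z : G} (hzH : z ∈ H) (hzK : z ∈ K) (hz : z ≠ 1) : H ≤ K := by
  have : Finite H := Nat.finite_of_card_ne_zero hH.ne_zero
  have hord : orderOf z = Nat.card H :=
    (hH.eq_one_or_self_of_dvd _ (H.orderOf_dvd_natCard hzH)).resolve_left
      (orderOf_eq_one_iff.not.mpr hz)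
  have hzpowers : zpowers z = H :=
    eq_of_le_of_card_ge (zpowers_le.mpr hzH) (by rw [Nat.card_zpowers, hord])
  exact hzpowers ▸ zpowers_le.mpr hzK

theorem pow_card_center_mem_center {G : Type*} [Group G]
    (hGZ : commutator G ≤ Subgroup.center G) (g : G) :
    g ^ Nat.card (Subgroup.center G) ∈ Subgroup.center G := by
  set n := Nat.card (Subgroup.center G)
  refine Subgroup.mem_center_iff.mpr fun h => mul_inv_eq_iff_eq_mul.mp ?_
  have hc : ⁅h, g⁆ ∈ Subgroup.center G :=
    hGZ (Subgroup.commutator_mem_commutator (Subgroup.mem_top h) (Subgroup.mem_top g))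
  calc h * g ^ n * h⁻¹ = (⁅h, g⁆ * g) ^ n := by rw [← conj_pow]; congr 1; group
    _ = ⁅h, g⁆ ^ n * g ^ n := Commute.mul_pow (Subgroup.mem_center_iff.mp hc g).symm n
    _ = g ^ n := by
      rw [orderOf_dvd_iff_pow_eq_one.mp (Subgroup.orderOf_dvd_natCard _ hc), one_mul]

theorem LinearMap.eq_det_smul_one_of_finrank_eq_one {K V : Type*} [Field K] [AddCommGroup V]
    [Module K V] (h : Module.finrank K V = 1) (f : Module.End K V) : f = LinearMap.det f • 1 := by
  obtain ⟨v, -, hv⟩ := finrank_eq_one_iff'.mp h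
  obtain ⟨c, hc⟩ := hv (f v)
  have hf : f = c • 1 := LinearMap.ext fun w => by
    obtain ⟨a, rfl⟩ := hv w
    rw [map_smul, ← hc, LinearMap.smul_apply, Module.End.one_apply, smul_comm]
  rw [hf, LinearMap.det_smul, h, pow_one, map_one, mul_one]

theorem MonoidHom.index_ker_dvd_of_pow_mem_commutator {G : Type*} [Group G] (χ : G →* ℂˣ)
    {n : ℕ} [NeZero n] (hpow : ∀ g : G, g ^ n ∈ commutator G) : χ.ker.index ∣ n := by
  have hrange : χ.range ≤ rootsOfUnity n ℂ := by
    rintro _ ⟨g, rfl⟩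
    rw [mem_rootsOfUnity, ← map_pow, ← MonoidHom.mem_ker]
    exact Abelianization.commutator_subset_ker χ (hpow g)
  rw [Subgroup.index_ker, ← Complex.card_rootsOfUnity n]
  exact Subgroup.card_dvd_of_le hrange

theorem MonoidHom.exists_index_ker_eq_of_pow_mem_commutator {G : Type*} [Group G] [Finite G]
    {p : ℕ} (hp : p.Prime) (hpow : ∀ g : G, g ^ p ∈ commutator G) (hG : commutator G ≠ ⊤) :
    ∃ χ : G →* ℂˣ, χ.ker.index = p := by
  have : Nontrivial (Abelianization G) := QuotientGroup.nontrivial_iff.mpr hG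
  obtain ⟨a, ha⟩ := exists_ne (1 : Abelianization G)
  have : NeZero (Monoid.exponent (Abelianization G) : ℂ) :=
    ⟨Nat.cast_ne_zero.mpr Monoid.exponent_ne_zero_of_finite⟩
  obtain ⟨φ, hφ⟩ :=
    CommGroup.exists_apply_ne_one_of_hasEnoughRootsOfUnity (Abelianization G) ℂ ha
  have : NeZero p := ⟨hp.ne_zero⟩
  set χ := φ.comp Abelianization.of
  refine ⟨χ, (hp.eq_one_or_self_of_dvd _ (χ.index_ker_dvd_of_pow_mem_commutator hpow)).resolve_left
    fun h => hφ ?_⟩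
  obtain ⟨g, rfl⟩ := QuotientGroup.mk_surjective a
  exact (Subgroup.index_eq_one.mp h ▸ Subgroup.mem_top g : g ∈ χ.ker)

namespace Representation

variable {G : Type*} [Group G]

noncomputable def ofChar (χ : G →* ℂˣ) : Representation ℂ G ℂ :=
  (algebraMap ℂ (Module.End ℂ ℂ)).toMonoidHom.comp ((Units.coeHom ℂ).comp χ)

theorem ofChar_apply (χ : G →* ℂˣ) (g : G) (v : ℂ) : ofChar χ g v = χ g * v := by
  simp [ofChar, Module.algebraMap_end_apply]

end Representation

namespace Rep

variable {G V : Type*} [Group G] [AddCommGroup V] [Module ℂ V]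

theorem mem_ker_iff {ρ : Representation ℂ G V} {g : G} : g ∈ Rep.ker ρ ↔ ρ g = 1 := by
  rw [Rep.ker, MonoidHom.mem_ker, Units.ext_iff, Representation.asGroupHom_apply, Units.val_one]

theorem isIrreducible_ofChar_s17 (χ : G →* ℂˣ) : IsIrreducible (Representation.ofChar χ) :=
  ⟨inferInstance, fun W _ => Ideal.eq_bot_or_top W⟩

theorem cod_ofChar (χ : G →* ℂˣ) : Rep.cod (Representation.ofChar χ) = χ.ker.index := by
  have hker : Rep.ker (Representation.ofChar χ) = χ.ker := by
    ext g
    rw [mem_ker_iff, MonoidHom.mem_ker, LinearMap.ext_ring_iff, Representation.ofChar_apply,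
      mul_one, Module.End.one_apply, Units.val_eq_one]
  rw [Rep.cod, hker, Module.finrank_self, Nat.div_one]

theorem cod_dvd_of_finrank_eq_one {ρ : Representation ℂ G V} (h1 : Module.finrank ℂ V = 1)
    {n : ℕ} [NeZero n] (hpow : ∀ g : G, g ^ n ∈ commutator G) : Rep.cod ρ ∣ n := by
  set χ : G →* ℂˣ := (Units.map LinearMap.det).comp ρ.asGroupHom
  have hker : χ.ker = Rep.ker ρ := by
    ext g
    rw [mem_ker_iff, MonoidHom.mem_ker, Units.ext_iff]
    change LinearMap.det (ρ g) = 1 ↔ ρ g = 1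
    refine ⟨fun h => ?_, fun h => by rw [h, map_one]⟩
    rw [LinearMap.eq_det_smul_one_of_finrank_eq_one h1 (ρ g), h, one_smul]
  rw [Rep.cod, h1, Nat.div_one, ← hker]
  exact χ.index_ker_dvd_of_pow_mem_commutator hpow

theorem trace_eq_zero_of_commutator_eq_smul_one {ρ : Representation ℂ G V} {y g : G} {c : ℂ}
    (hc : ρ ⁅y, g⁆ = c • 1) (hc1 : c ≠ 1) : LinearMap.trace ℂ V (ρ g) = 0 := by
  have hconj : ρ (y * g * y⁻¹) = ρ y * ρ g * ρ y⁻¹ := by rw [map_mul, map_mul]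
  have htr : c * LinearMap.trace ℂ V (ρ g) = LinearMap.trace ℂ V (ρ g) := by
    calc c * LinearMap.trace ℂ V (ρ g) = LinearMap.trace ℂ V (ρ (⁅y, g⁆ * g)) := by
          rw [map_mul, hc, smul_mul_assoc, one_mul, map_smul, smul_eq_mul]
      _ = LinearMap.trace ℂ V (ρ y * ρ g * ρ y⁻¹) := by rw [← hconj]; group
      _ = LinearMap.trace ℂ V (ρ g) := by
          rw [LinearMap.trace_mul_cycle, ← map_mul, inv_mul_cancel, map_one, one_mul]
  have : (c - 1) * LinearMap.trace ℂ V (ρ g) = 0 := by rw [sub_mul, htr, one_mul, sub_self]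
  exact (mul_eq_zero.mp this).resolve_left (sub_ne_zero.mpr hc1)

theorem IsIrreducible.exists_eq_smul_one [FiniteDimensional ℂ V] {ρ : Representation ℂ G V}
    (hρ : IsIrreducible ρ) {f : Module.End ℂ V} (hf : ∀ g, Commute (ρ g) f) :
    ∃ c : ℂ, f = c • 1 := by
  obtain ⟨_, hρ⟩ := hρ
  obtain ⟨c, hc⟩ := Module.End.exists_eigenvalue f
  have hinv : ∀ g : G, ∀ v ∈ f.eigenspace c, ρ g v ∈ f.eigenspace c := by
    intro g v hv
    rw [Module.End.mem_eigenspace_iff] at hv ⊢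
    rw [← Module.End.mul_apply, ← (hf g).eq, Module.End.mul_apply, hv, map_smul]
  have htop : f.eigenspace c = ⊤ := (hρ _ hinv).resolve_left hc
  refine ⟨c, LinearMap.ext fun v => ?_⟩
  simpa using Module.End.mem_eigenspace_iff.mp (htop ▸ Submodule.mem_top : v ∈ f.eigenspace c)

/-- By Schur's lemma an irreducible representation with abelian image acts by scalars, so every
line is invariant. -/
theorem IsIrreducible.finrank_eq_one_of_commutator_le_ker [FiniteDimensional ℂ V]
    {ρ : Representation ℂ G V} (hρ : IsIrreducible ρ) (hker : commutator G ≤ Rep.ker ρ) :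
    Module.finrank ℂ V = 1 := by
  have hcomm : ∀ x y : G, Commute (ρ x) (ρ y) := fun x y => by
    have h : ρ ⁅x, y⁆ = 1 :=
      mem_ker_iff.mp (hker (Subgroup.commutator_mem_commutator (Subgroup.mem_top x)
        (Subgroup.mem_top y)))
    rw [Commute, SemiconjBy, ← map_mul, ← map_mul, ← one_mul (ρ (y * x)), ← h, ← map_mul]
    congr 1
    group
  obtain ⟨hV, hirr⟩ := hρ
  obtain ⟨v, hv⟩ := exists_ne (0 : V)
  have hline : ∀ g : G, ∀ w ∈ ℂ ∙ v, ρ g w ∈ ℂ ∙ v := fun g w hw => by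
    obtain ⟨c, hc⟩ := IsIrreducible.exists_eq_smul_one ⟨hV, hirr⟩ (hcomm · g)
    rw [hc]
    exact Submodule.smul_mem _ c hw
  rcases hirr _ hline with h | h
  · exact absurd (Submodule.span_singleton_eq_bot.mp h) hv
  · rw [← finrank_top ℂ V, ← h, finrank_span_singleton hv]

section Nonlinear

variable [FiniteDimensional ℂ V] {ρ : Representation ℂ G V}

theorem IsIrreducible.apply_ne_one_of_mem_center (hZ : (Nat.card (Subgroup.center G)).Prime)
    (hZG' : Subgroup.center G = commutator G) (hρ : IsIrreducible ρ)
    (hV : 1 < Module.finrank ℂ V) {z : G} (hz : z ∈ Subgroup.center G) (hz1 : z ≠ 1) :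
    ρ z ≠ 1 := fun h => by
  have hker : commutator G ≤ Rep.ker ρ :=
    hZG' ▸ Subgroup.le_of_mem_of_prime_card hZ hz (mem_ker_iff.mpr h) hz1
  exact hV.ne' (hρ.finrank_eq_one_of_commutator_le_ker hker)

theorem IsIrreducible.trace_eq_zero_of_notMem_center (hZ : (Nat.card (Subgroup.center G)).Prime)
    (hZG' : Subgroup.center G = commutator G) (hρ : IsIrreducible ρ)
    (hV : 1 < Module.finrank ℂ V) {g : G} (hg : g ∉ Subgroup.center G) :
    LinearMap.trace ℂ V (ρ g) = 0 := by
  obtain ⟨y, hy⟩ : ∃ y, ⁅y, g⁆ ≠ 1 := by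
    by_contra! h
    exact hg (Subgroup.mem_center_iff.mpr fun y => commutatorElement_eq_one_iff_mul_comm.mp (h y))
  have hyg : ⁅y, g⁆ ∈ Subgroup.center G :=
    hZG' ▸ Subgroup.commutator_mem_commutator (Subgroup.mem_top y) (Subgroup.mem_top g)
  obtain ⟨c, hc⟩ := hρ.exists_eq_smul_one (f := ρ ⁅y, g⁆) fun x => by
    rw [Commute, SemiconjBy, ← map_mul, ← map_mul, Subgroup.mem_center_iff.mp hyg x]
  refine trace_eq_zero_of_commutator_eq_smul_one hc fun hc1 => ?_
  exact hρ.apply_ne_one_of_mem_center hZ hZG' hV hyg hy (by rw [hc, hc1, one_smul])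

theorem IsIrreducible.ker_eq_bot (hZ : (Nat.card (Subgroup.center G)).Prime)
    (hZG' : Subgroup.center G = commutator G) (hρ : IsIrreducible ρ)
    (hV : 1 < Module.finrank ℂ V) : Rep.ker ρ = ⊥ := by
  refine (Subgroup.eq_bot_iff_forall _).mpr fun g hg => ?_
  rw [mem_ker_iff] at hg
  by_contra hg1
  by_cases hgc : g ∈ Subgroup.center G
  · exact hρ.apply_ne_one_of_mem_center hZ hZG' hV hgc hg1 hg
  · have h0 := hρ.trace_eq_zero_of_notMem_center hZ hZG' hV hgc
    rw [hg, LinearMap.trace_one, Nat.cast_eq_zero] at h0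
    omega

theorem IsIrreducible.cod_eq (hZ : (Nat.card (Subgroup.center G)).Prime)
    (hZG' : Subgroup.center G = commutator G) (hρ : IsIrreducible ρ)
    (hV : 1 < Module.finrank ℂ V) : Rep.cod ρ = Nat.card G / Module.finrank ℂ V := by
  rw [Rep.cod, hρ.ker_eq_bot hZ hZG' hV, Subgroup.index_bot]

end Nonlinear

end Rep

theorem index_ker_mem_codSet {G : Type*} [Group G] (χ : G →* ℂˣ) : χ.ker.index ∈ codSet G :=
  ⟨ℂ, _, _, inferInstance, Representation.ofChar χ, Rep.isIrreducible_ofChar_s17 χ, Rep.cod_ofChar χ⟩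

theorem codSet_eq_of_cdSet_eq {G : Type*} [Group G] [Finite G] {p d : ℕ} (hp : p.Prime)
    (hZ : (Nat.card (Subgroup.center G)).Prime) (hZG' : Subgroup.center G = commutator G)
    (hpow : ∀ g : G, g ^ p ∈ commutator G) (hG : commutator G ≠ ⊤)
    (hcd : cdSet G = {1, d}) (hd : 1 < d) : codSet G = {1, p, Nat.card G / d} := by
  have : NeZero p := ⟨hp.ne_zero⟩
  ext n
  constructor
  · rintro ⟨V, _, _, hV, ρ, hρ, rfl⟩
    have hdeg : Module.finrank ℂ V ∈ cdSet G := ⟨V, _, _, hV, ρ, hρ, rfl⟩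
    rcases hcd ▸ hdeg with hlin | hnonlin
    · exact (hp.eq_one_or_self_of_dvd _ (Rep.cod_dvd_of_finrank_eq_one hlin hpow)).imp_right
        Or.inl
    · rw [Set.mem_singleton_iff] at hnonlin
      exact Or.inr (Or.inr (hnonlin ▸ hρ.cod_eq hZ hZG' (hnonlin ▸ hd)))
  · rintro (rfl | rfl | rfl)
    · simpa using index_ker_mem_codSet (1 : G →* ℂˣ)
    · obtain ⟨χ, hχ⟩ := MonoidHom.exists_index_ker_eq_of_pow_mem_commutator hp hpow hG
      exact hχ ▸ index_ker_mem_codSet χ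
    · obtain ⟨V, _, _, hV, ρ, hρ, hdeg⟩ : d ∈ cdSet G := hcd ▸ Or.inr rfl
      exact ⟨V, _, _, hV, ρ, hρ, hdeg ▸ hρ.cod_eq hZ hZG' (hdeg ▸ hd)⟩

theorem stmt17_general {p : ℕ} (hp : p.Prime) (G : Type*) [Group G] [Finite G]
    (hcard : Nat.card G = p ^ 5) (hZG' : Subgroup.center G = commutator G)
    (hZ : Nat.card (Subgroup.center G) = p) (hcd : cdSet G = {1, p ^ 2}) :
    IsVZ G ∧
      (Nontrivial (G ⧸ Subgroup.center G) ∧ ∀ x : G ⧸ Subgroup.center G, x ^ p = 1) ∧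
      codSet G = {1, p, p ^ 3} := by
  have hZp : (Nat.card (Subgroup.center G)).Prime := hZ ▸ hp
  have hpow : ∀ g : G, g ^ p ∈ Subgroup.center G := hZ ▸ pow_card_center_mem_center hZG'.ge
  have hZ_ne_top : Subgroup.center G ≠ ⊤ := fun h => by
    have hcard_eq := (Subgroup.card_eq_iff_eq_top _).mpr h
    rw [hZ, hcard] at hcard_eq
    exact (pow_one p ▸ Nat.pow_lt_pow_right hp.one_lt (by norm_num : 1 < 5)).ne hcard_eq
  refine ⟨fun V _ _ _ ρ hρ hV g hg => hρ.trace_eq_zero_of_notMem_center hZp hZG' hV hg,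
    ⟨QuotientGroup.nontrivial_iff.mpr hZ_ne_top, fun x => ?_⟩, ?_⟩
  · induction x using QuotientGroup.induction_on with
    | H g => rw [← QuotientGroup.mk_pow, QuotientGroup.eq_one_iff]; exact hpow g
  · rw [codSet_eq_of_cdSet_eq hp hZp hZG' (hZG' ▸ hpow) (hZG' ▸ hZ_ne_top) hcd
      (Nat.one_lt_pow two_ne_zero hp.one_lt), hcard, Nat.pow_div (by norm_num) hp.pos]

/-- Let `G` be a group of order `p^5` (`p > 3` prime) with
`Z(G) = G' ≅ C_p` and `cd(G) = {1, p^2}`. Then `G` is a VZ-group and an extraspecial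
`p`-group, and `cod(G) = {1, p, p^3}`. -/
theorem stmt17 {p : ℕ} (hp : p.Prime) (hp3 : 3 < p) (G : Type*) [Group G] [Finite G]
    (hcard : Nat.card G = p ^ 5) (hZG' : Subgroup.center G = commutator G)
    (hZ : Nat.card (Subgroup.center G) = p) (hcd : cdSet G = {1, p ^ 2}) :
    IsVZ G ∧
      (Nontrivial (G ⧸ Subgroup.center G) ∧ ∀ x : G ⧸ Subgroup.center G, x ^ p = 1) ∧
      codSet G = {1, p, p ^ 3} :=
  stmt17_general hp G hcard hZG' hZ hcd
end
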